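/- Let ω ∈ ℤⁿ and let b₀,…,b_k ∈ ℂ[x₁,…,xₙ] be nonzero polynomials such that for each j the initial form in_ω(b_j) is a single term with exponent α_j; set ν := (⟨ω,α₀⟩,…,⟨ω,α_k⟩) ∈ ℤ^{k+1}, and let I ⊆ ℂ[z₀,…,z_k] be the kernel of the ℂ-algebra homomorphism ℂ[z₀,…,z_k] → ℂ[x₁,…,xₙ] sending z_j ↦ b_j. Assume {b₀,…,b_k} is a SAGBI basis for S = ℂ[b₀,…,b_k] with respect to ω. Then the kernel of the ℂ[t]-algebra homomorphism ℂ[z₀,…,z_k][t] → ℂ[x₁,…,xₙ][t] sending z_j ↦ (b_j)_t^ω and t ↦ t equals the homogenized ideal I_t^ν; consequently the ℂ[t]-subalgebra of ℂ[x₁,…,xₙ][t] generated by (b₀)_t^ω,…,(b_k)_t^ω is isomorphic to ℂ[z₀,…,z_k][t]/I_t^ν. -/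

import Mathlib

open MvPolynomial Polynomial

noncomputable section

/-- The weighted dot product `⟨ω, α⟩ = Σ_i ω_i · α_i`. -/
def wdot {σ : Type*} (ω : σ → ℤ) (α : σ →₀ ℕ) : ℤ :=
  α.sum fun i e => ω i * (e : ℤ)

/-- The ω-degree `v_ω(f) = max{⟨ω,α⟩ : α ∈ supp f}` (junk value `0` for `f = 0`). -/
def wdeg {σ : Type*} (ω : σ → ℤ) (f : MvPolynomial σ ℂ) : ℤ :=
  WithBot.unbotD 0 (f.support.sup fun α => (wdot ω α : WithBot ℤ))

/-- The initial form `in_ω(f)`, the sum of the terms of `f` of maximal ω-degree. -/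
def initForm {σ : Type*} (ω : σ → ℤ) (f : MvPolynomial σ ℂ) : MvPolynomial σ ℂ :=
  ∑ α ∈ f.support.filter (fun α => wdot ω α = wdeg ω f), monomial α (f.coeff α)

/-- The ω-homogenization `f_t^ω = Σ_α c_α t^{v_ω(f) − ⟨ω,α⟩} x^α ∈ ℂ[x₁,…,xₙ][t]`. -/
def homog {σ : Type*} (ω : σ → ℤ) (f : MvPolynomial σ ℂ) :
    Polynomial (MvPolynomial σ ℂ) :=
  ∑ α ∈ f.support,
    Polynomial.C (monomial α (f.coeff α)) * Polynomial.X ^ (wdeg ω f - wdot ω α).toNat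

/-- The homogenized ideal `I_t^ν`, generated by `{f_t^ν : f ∈ I, f ≠ 0}`. -/
def idealHomog {σ : Type*} (ν : σ → ℤ) (I : Ideal (MvPolynomial σ ℂ)) :
    Ideal (Polynomial (MvPolynomial σ ℂ)) :=
  Ideal.span {g | ∃ f ∈ I, f ≠ 0 ∧ g = homog ν f}

/-- The initial ideal `in_ν(I)`, generated by `{in_ν(f) : f ∈ I, f ≠ 0}`. -/
def initIdeal {σ : Type*} (ν : σ → ℤ) (I : Ideal (MvPolynomial σ ℂ)) :
    Ideal (MvPolynomial σ ℂ) :=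
  Ideal.span {g | ∃ f ∈ I, f ≠ 0 ∧ g = initForm ν f}

/-- `{b i}` is a SAGBI basis for `S = ℂ[b₀,…,b_k]` with respect to `ω` if the ℂ-linear span
of `{in_ω(f) : f ∈ S, f ≠ 0}` equals the ℂ-subalgebra generated by the `in_ω(b_i)`. -/
def IsSagbiBasis {σ : Type*} {ι : Type*} (ω : σ → ℤ) (b : ι → MvPolynomial σ ℂ) : Prop :=
  Submodule.span ℂ
      {g | ∃ f ∈ Algebra.adjoin ℂ (Set.range b), f ≠ 0 ∧ g = initForm ω f}
    = Subalgebra.toSubmodule (Algebra.adjoin ℂ (Set.range fun i => initForm ω (b i)))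

/-!
Grade `ℂ[z][t]` by `deg z_j = ν_j`, `deg t = 1`, and `ℂ[x][t]` by `deg x^a = ⟨ω, a⟩`, `deg t = 1`.
Since `in_ω(b_j)` is the single term `c_j x^{α_j}`, we have `ν_j = v_ω(b_j)`, so `(b_j)_t^ω` is
homogeneous of degree `ν_j` and the evaluation map `z_j ↦ (b_j)_t^ω, t ↦ t` is graded; hence its
kernel is spanned by homogeneous elements. A homogeneous element is determined by its degree and
its value at `t = 1`: a homogeneous `g` of degree `d` equals `t^{d - v_ν(g(1))} · g(1)_t^ν`, and
`g(1) ∈ I` when `g` lies in the kernel. Conversely, for `f ∈ I` the image of `f_t^ν` is homogeneous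
with value `f(b) = 0` at `t = 1`, hence zero. The isomorphism is then the first isomorphism
theorem, the image being generated by `t` and the `(b_j)_t^ω`.
-/

open Finsupp (weight)

namespace Polynomial

variable {R σ : Type*} [CommRing R]

/-- Homogeneity of degree `d` for the grading of `R[x][t]` in which `t` has degree `1` and
`x^a` has degree `⟨ω, a⟩`. -/
def IsTHomogeneous (ω : σ → ℤ) (d : ℤ) (h : (MvPolynomial σ R)[X]) : Prop :=
  ∀ m : ℕ, (h.coeff m).IsWeightedHomogeneous ω (d - m)

variable {ω : σ → ℤ} {d e : ℤ} {g h : (MvPolynomial σ R)[X]}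

theorem isTHomogeneous_zero (ω : σ → ℤ) (d : ℤ) :
    IsTHomogeneous ω d (0 : (MvPolynomial σ R)[X]) :=
  fun m => by simpa using MvPolynomial.isWeightedHomogeneous_zero R ω (d - m)

theorem isTHomogeneous_C_mul_X_pow {p : MvPolynomial σ R} (hp : p.IsWeightedHomogeneous ω e)
    (m : ℕ) : IsTHomogeneous ω (e + m) (C p * X ^ m) := fun k => by
  rw [coeff_C_mul_X_pow]
  split_ifs with hk
  · subst hk
    simpa using hp
  · exact MvPolynomial.isWeightedHomogeneous_zero R ω _

theorem isTHomogeneous_X_pow (ω : σ → ℤ) (m : ℕ) :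
    IsTHomogeneous ω m (X ^ m : (MvPolynomial σ R)[X]) := by
  simpa using isTHomogeneous_C_mul_X_pow (MvPolynomial.isWeightedHomogeneous_one R ω) m

theorem isTHomogeneous_algebraMap (ω : σ → ℤ) (r : R) :
    IsTHomogeneous ω 0 (algebraMap R (MvPolynomial σ R)[X] r) := by
  simpa [Polynomial.algebraMap_apply] using
    isTHomogeneous_C_mul_X_pow (MvPolynomial.isWeightedHomogeneous_C (R := R) ω r) 0

namespace IsTHomogeneous

theorem add (hg : IsTHomogeneous ω d g) (hh : IsTHomogeneous ω d h) :
    IsTHomogeneous ω d (g + h) :=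
  fun m => by simpa using (hg m).add (hh m)

theorem sum {ι : Type*} (s : Finset ι) {f : ι → (MvPolynomial σ R)[X]}
    (hf : ∀ i ∈ s, IsTHomogeneous ω d (f i)) : IsTHomogeneous ω d (∑ i ∈ s, f i) :=
  fun m => by
    simpa [finsetSum_coeff] using MvPolynomial.IsWeightedHomogeneous.sum s _ _ (hf · · m)

theorem mul (hg : IsTHomogeneous ω d g) (hh : IsTHomogeneous ω e h) :
    IsTHomogeneous ω (d + e) (g * h) := fun m => by
  rw [coeff_mul]
  refine MvPolynomial.IsWeightedHomogeneous.sum _ _ _ fun x hx => ?_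
  have hm : ((x.1 + x.2 : ℕ) : ℤ) = m := by
    rw [Finset.HasAntidiagonal.mem_antidiagonal.1 hx]
  convert (hg x.1).mul (hh x.2) using 1
  push_cast at hm
  omega

theorem pow (hg : IsTHomogeneous ω d g) (n : ℕ) : IsTHomogeneous ω (n * d) (g ^ n) := by
  induction n with
  | zero => simpa using isTHomogeneous_algebraMap (R := R) ω 1
  | succ n ih => simpa [pow_succ, add_mul] using ih.mul hg

theorem prod {ι : Type*} (s : Finset ι) {f : ι → (MvPolynomial σ R)[X]} {d : ι → ℤ}
    (hf : ∀ i ∈ s, IsTHomogeneous ω (d i) (f i)) :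
    IsTHomogeneous ω (∑ i ∈ s, d i) (∏ i ∈ s, f i) := by
  classical
  induction s using Finset.induction_on with
  | empty => simpa using isTHomogeneous_algebraMap (R := R) ω 1
  | insert i s hi ih =>
    rw [Finset.sum_insert hi, Finset.prod_insert hi]
    exact (hf i (s.mem_insert_self i)).mul (ih fun j hj => hf j (Finset.mem_insert_of_mem hj))

end IsTHomogeneous

theorem coeff_eval_one_eq_sum (h : (MvPolynomial σ R)[X]) (a : σ →₀ ℕ) :
    (h.eval 1).coeff a = ∑ m ∈ h.support, (h.coeff m).coeff a := by
  simp [eval_eq_sum, sum_def, MvPolynomial.coeff_sum]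

namespace IsTHomogeneous

theorem coeff_eval_one (hh : IsTHomogeneous ω d h) (a : σ →₀ ℕ) :
    (h.eval 1).coeff a = (h.coeff (d - weight ω a).toNat).coeff a := by
  rw [coeff_eval_one_eq_sum]
  refine Finset.sum_eq_single _ (fun m _ hm => ?_) (fun hm => by simp [notMem_support_iff.1 hm])
  by_contra hne
  have := hh m hne
  omega

theorem eq_of_eval_one_eq (hg : IsTHomogeneous ω d g) (hh : IsTHomogeneous ω d h)
    (h1 : g.eval 1 = h.eval 1) : g = h := by
  ext m a
  by_cases hm : (m : ℤ) = d - weight ω a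
  · obtain rfl : m = (d - weight ω a).toNat := by omega
    rw [← hg.coeff_eval_one, ← hh.coeff_eval_one, h1]
  · rw [(hg m).coeff_eq_zero a (by omega), (hh m).coeff_eq_zero a (by omega)]

theorem eq_zero_of_eval_one_eq_zero (hh : IsTHomogeneous ω d h) (h1 : h.eval 1 = 0) : h = 0 :=
  hh.eq_of_eval_one_eq (isTHomogeneous_zero ω d) (by rw [h1, eval_zero])

theorem weight_le_of_mem_support_eval_one (hh : IsTHomogeneous ω d h) {a : σ →₀ ℕ}
    (ha : a ∈ (h.eval 1).support) : weight ω a ≤ d := by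
  rw [MvPolynomial.mem_support_iff, hh.coeff_eval_one] at ha
  have := hh _ ha
  omega

end IsTHomogeneous

variable (ω d) in
def tComponent : (MvPolynomial σ R)[X] →ₗ[R] (MvPolynomial σ R)[X] :=
  lsum fun m => ((monomial m).restrictScalars R).comp (weightedHomogeneousComponent ω (d - m))

theorem coeff_tComponent (g : (MvPolynomial σ R)[X]) (m : ℕ) :
    (tComponent ω d g).coeff m = weightedHomogeneousComponent ω (d - m) (g.coeff m) := by
  simp +contextual [tComponent, sum_def, coeff_monomial]

theorem isTHomogeneous_tComponent (g : (MvPolynomial σ R)[X]) :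
    IsTHomogeneous ω d (tComponent ω d g) := fun m => by
  rw [coeff_tComponent]
  exact MvPolynomial.weightedHomogeneousComponent_isWeightedHomogeneous _ _

theorem IsTHomogeneous.tComponent_eq_self (hh : IsTHomogeneous ω d h) :
    tComponent ω d h = h := by
  ext1 m
  rw [coeff_tComponent, (hh m).weightedHomogeneousComponent_same]

theorem IsTHomogeneous.tComponent_eq_zero (hh : IsTHomogeneous ω e h) (hde : d ≠ e) :
    tComponent ω d h = 0 := by
  ext1 m
  rw [coeff_tComponent, (hh m).weightedHomogeneousComponent_ne _ (by omega), coeff_zero]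

theorem IsTHomogeneous.eq_zero_of_sum_eq_zero {D : Finset ℤ} {h : ℤ → (MvPolynomial σ R)[X]}
    (hh : ∀ e ∈ D, IsTHomogeneous ω e (h e)) (hsum : ∑ e ∈ D, h e = 0) (hd : d ∈ D) :
    h d = 0 :=
  calc h d = ∑ e ∈ D, tComponent ω d (h e) := by
        rw [Finset.sum_eq_single_of_mem d hd fun e he hed =>
          (hh e he).tComponent_eq_zero hed.symm, (hh d hd).tComponent_eq_self]
    _ = 0 := by rw [← map_sum, hsum, map_zero]

variable (ω) in
def tWeights (g : (MvPolynomial σ R)[X]) : Finset ℤ :=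
  g.support.biUnion fun m => (g.coeff m).support.image fun a => m + weight ω a

theorem sum_tComponent (g : (MvPolynomial σ R)[X]) :
    ∑ d ∈ tWeights ω g, tComponent ω d g = g := by
  classical
  ext m a
  simp only [finsetSum_coeff, coeff_tComponent, MvPolynomial.coeff_sum,
    MvPolynomial.coeff_weightedHomogeneousComponent]
  by_cases hc : (g.coeff m).coeff a = 0
  · simp [hc]
  have hmem : m + weight ω a ∈ tWeights ω g :=
    Finset.mem_biUnion.2 ⟨m, mem_support_iff.2 fun h => by simp [h] at hc,
      Finset.mem_image_of_mem _ (MvPolynomial.mem_support_iff.2 hc)⟩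
  rw [Finset.sum_eq_single_of_mem _ hmem fun e _ he => if_neg (by omega), if_pos (by omega)]

variable {τ : Type*} {ν : τ → ℤ} {f : τ → (MvPolynomial σ R)[X]}

theorem isTHomogeneous_aeval (hf : ∀ j, IsTHomogeneous ω (ν j) (f j))
    {q : MvPolynomial τ R} (hq : q.IsWeightedHomogeneous ν e) :
    IsTHomogeneous ω e (MvPolynomial.aeval f q) := by
  induction hq using MvPolynomial.IsWeightedHomogeneous.induction_on with
  | zero => simpa using isTHomogeneous_zero (R := R) ω e
  | add p q _ _ hp hq => simpa using hp.add hq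
  | monomial β r hβ =>
    rw [MvPolynomial.aeval_monomial, ← hβ, Finsupp.weight_apply, Finsupp.sum,
      ← zero_add (∑ _ ∈ _, _)]
    exact (isTHomogeneous_algebraMap ω r).mul
      (.prod _ fun j _ => by simpa [mul_comm] using (hf j).pow (β j))

theorem isTHomogeneous_aevalTower_aeval (hf : ∀ j, IsTHomogeneous ω (ν j) (f j))
    {g : (MvPolynomial τ R)[X]} (hg : IsTHomogeneous ν d g) :
    IsTHomogeneous ω d (aevalTower (MvPolynomial.aeval f) X g) := by
  rw [g.as_sum_support_C_mul_X_pow, map_sum]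
  refine .sum _ fun m _ => ?_
  rw [map_mul, map_pow, aevalTower_C, aevalTower_X, ← sub_add_cancel d m]
  exact (isTHomogeneous_aeval hf (hg m)).mul (isTHomogeneous_X_pow ω m)

theorem eval_one_aevalTower_aeval (g : (MvPolynomial τ R)[X]) :
    (aevalTower (MvPolynomial.aeval f) X g).eval 1 =
      MvPolynomial.aeval (fun j => (f j).eval 1) (g.eval 1) := by
  induction g using Polynomial.induction_on' with
  | add p q hp hq => simp [hp, hq]
  | monomial m q =>
    have hq : (MvPolynomial.aeval f q).eval 1 = MvPolynomial.aeval (fun j => (f j).eval 1) q :=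
      congrArg (· q) (MvPolynomial.comp_aeval (f := f)
        ((Polynomial.aeval (1 : MvPolynomial σ R)).restrictScalars R))
    simp [← C_mul_X_pow_eq_monomial, hq]

end Polynomial

section Homogenization

variable {σ : Type*} {ω : σ → ℤ}

theorem wdot_eq_weight (ω : σ → ℤ) : wdot ω = weight ω := by
  ext a
  simp [wdot, Finsupp.weight_apply, mul_comm]

theorem wdot_le_wdeg {f : MvPolynomial σ ℂ} {a : σ →₀ ℕ} (ha : a ∈ f.support) :
    wdot ω a ≤ wdeg ω f :=
  WithBot.coe_le_coe.1 ((Finset.le_sup (f := fun a => (wdot ω a : WithBot ℤ)) ha).trans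
    (WithBot.le_coe_unbotD _ 0))

theorem wdeg_le_of_forall_wdot_le {f : MvPolynomial σ ℂ} (hf : f ≠ 0) {d : ℤ}
    (h : ∀ a ∈ f.support, wdot ω a ≤ d) : wdeg ω f ≤ d := by
  obtain ⟨a, ha⟩ := support_nonempty.2 hf
  rw [wdeg, WithBot.unbotD_le_iff fun hbot => absurd hbot
    (ne_bot_of_le_ne_bot WithBot.coe_ne_bot
      (Finset.le_sup (f := fun a => (wdot ω a : WithBot ℤ)) ha))]
  exact Finset.sup_le fun a ha => WithBot.coe_le_coe.2 (h a ha)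

theorem initForm_eq_weightedHomogeneousComponent (f : MvPolynomial σ ℂ) :
    initForm ω f = weightedHomogeneousComponent ω (wdeg ω f) f := by
  rw [initForm, weightedHomogeneousComponent_apply, wdot_eq_weight]

theorem wdot_eq_wdeg_of_initForm_eq_monomial {f : MvPolynomial σ ℂ} {a : σ →₀ ℕ} {c : ℂ}
    (h : initForm ω f = monomial a c) (hc : c ≠ 0) : wdot ω a = wdeg ω f := by
  have := weightedHomogeneousComponent_isWeightedHomogeneous (R := ℂ) (w := ω) (wdeg ω f) f
  rw [← initForm_eq_weightedHomogeneousComponent, h] at this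
  rw [wdot_eq_weight]
  exact this (by classical simpa [MvPolynomial.coeff_monomial] using hc)

theorem isTHomogeneous_homog (f : MvPolynomial σ ℂ) :
    IsTHomogeneous ω (wdeg ω f) (homog ω f) := by
  refine .sum _ fun a ha => ?_
  have hle := wdot_le_wdeg (ω := ω) ha
  rw [wdot_eq_weight] at hle
  convert isTHomogeneous_C_mul_X_pow (isWeightedHomogeneous_monomial ω a (f.coeff a) rfl) _
    using 1
  rw [wdot_eq_weight]
  omega

theorem eval_one_homog (f : MvPolynomial σ ℂ) : (homog ω f).eval 1 = f := by
  simp [homog, eval_finsetSum]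

theorem Polynomial.IsTHomogeneous.eq_homog_eval_one_mul_X_pow {d : ℤ}
    {g : (MvPolynomial σ ℂ)[X]} (hg : IsTHomogeneous ω d g) (h0 : g.eval 1 ≠ 0) :
    g = homog ω (g.eval 1) * X ^ (d - wdeg ω (g.eval 1)).toNat := by
  have hle : wdeg ω (g.eval 1) ≤ d := wdeg_le_of_forall_wdot_le h0 fun a ha =>
    wdot_eq_weight ω ▸ hg.weight_le_of_mem_support_eval_one ha
  refine hg.eq_of_eval_one_eq ?_ (by simp [eval_one_homog])
  convert (isTHomogeneous_homog _).mul (isTHomogeneous_X_pow ω _) using 1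
  omega

end Homogenization

section Kernel

variable {σ τ : Type*} {ω : σ → ℤ} {ν : τ → ℤ} {b : τ → MvPolynomial σ ℂ}

variable (ω b) in
def homogEval : (MvPolynomial τ ℂ)[X] →ₐ[ℂ] (MvPolynomial σ ℂ)[X] :=
  aevalTower (aeval fun j => homog ω (b j)) X

theorem eval_one_homogEval (g : (MvPolynomial τ ℂ)[X]) :
    (homogEval ω b g).eval 1 = MvPolynomial.aeval b (g.eval 1) := by
  simp only [homogEval, eval_one_aevalTower_aeval, eval_one_homog]

theorem isTHomogeneous_homogEval (hdeg : ∀ j, ν j = wdeg ω (b j)) {d : ℤ}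
    {g : (MvPolynomial τ ℂ)[X]} (hg : IsTHomogeneous ν d g) :
    IsTHomogeneous ω d (homogEval ω b g) :=
  isTHomogeneous_aevalTower_aeval (fun j => hdeg j ▸ isTHomogeneous_homog (b j)) hg

theorem idealHomog_le_ker_homogEval (hdeg : ∀ j, ν j = wdeg ω (b j)) :
    idealHomog ν (RingHom.ker (MvPolynomial.aeval b)) ≤ RingHom.ker (homogEval ω b) := by
  rw [idealHomog, Ideal.span_le]
  rintro _ ⟨f, hf, -, rfl⟩
  exact (isTHomogeneous_homogEval hdeg (isTHomogeneous_homog f)).eq_zero_of_eval_one_eq_zero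
    (by rw [eval_one_homogEval, eval_one_homog]; exact hf)

theorem Polynomial.IsTHomogeneous.mem_idealHomog {d : ℤ} {g : (MvPolynomial τ ℂ)[X]}
    (hg : IsTHomogeneous ν d g) (hker : homogEval ω b g = 0) :
    g ∈ idealHomog ν (RingHom.ker (MvPolynomial.aeval b)) := by
  by_cases h0 : g.eval 1 = 0
  · rw [hg.eq_zero_of_eval_one_eq_zero h0]
    exact zero_mem _
  rw [hg.eq_homog_eval_one_mul_X_pow h0]
  refine Ideal.mul_mem_right _ _ (Ideal.subset_span ⟨_, ?_, h0, rfl⟩)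
  rw [RingHom.mem_ker, ← eval_one_homogEval, hker, eval_zero]

theorem ker_homogEval_le_idealHomog (hdeg : ∀ j, ν j = wdeg ω (b j)) :
    RingHom.ker (homogEval ω b) ≤ idealHomog ν (RingHom.ker (MvPolynomial.aeval b)) := by
  intro g hg
  rw [← sum_tComponent (ω := ν) g]
  refine Ideal.sum_mem _ fun d hd => (isTHomogeneous_tComponent g).mem_idealHomog (ω := ω) ?_
  refine IsTHomogeneous.eq_zero_of_sum_eq_zero (h := fun d => homogEval ω b (tComponent ν d g))
    (fun e _ => isTHomogeneous_homogEval hdeg (isTHomogeneous_tComponent g)) ?_ hd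
  rw [← map_sum, sum_tComponent]
  exact hg

theorem ker_homogEval (hdeg : ∀ j, ν j = wdeg ω (b j)) :
    RingHom.ker (homogEval ω b) = idealHomog ν (RingHom.ker (MvPolynomial.aeval b)) :=
  (ker_homogEval_le_idealHomog hdeg).antisymm (idealHomog_le_ker_homogEval hdeg)

theorem range_homogEval :
    (homogEval ω b).range =
      Algebra.adjoin ℂ (Set.range (fun j => homog ω (b j)) ∪ {Polynomial.X}) := by
  have hcomp : (homogEval ω b).comp (optionEquivLeft ℂ τ).toAlgHom =
      aeval fun o => o.elim X fun j => homog ω (b j) := by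
    ext (_ | j) <;> simp [homogEval, optionEquivLeft_X_none, optionEquivLeft_X_some]
  rw [Set.union_singleton, ← Option.range_elim, ← aeval_range, ← hcomp, AlgHom.range_comp,
    ← Algebra.map_top]
  exact congrArg _ ((AlgHom.range_eq_top _).2 (optionEquivLeft ℂ τ).surjective).symm

end Kernel

theorem ker_homog_eval_eq_idealHomog_general {n k : ℕ} (ω : Fin n → ℤ)
    (b : Fin (k + 1) → MvPolynomial (Fin n) ℂ)
    (α : Fin (k + 1) → (Fin n →₀ ℕ)) (c : Fin (k + 1) → ℂ) (hc : ∀ j, c j ≠ 0)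
    (hin : ∀ j, initForm ω (b j) = monomial (α j) (c j))
    (ν : Fin (k + 1) → ℤ) (hν : ν = fun j => wdot ω (α j))
    (I : Ideal (MvPolynomial (Fin (k + 1)) ℂ))
    (hI : I = RingHom.ker (MvPolynomial.aeval b :
        MvPolynomial (Fin (k + 1)) ℂ →ₐ[ℂ] MvPolynomial (Fin n) ℂ).toRingHom) :
    RingHom.ker (Polynomial.eval₂RingHom
        (MvPolynomial.aeval (fun j => homog ω (b j)) :
          MvPolynomial (Fin (k + 1)) ℂ →ₐ[ℂ] Polynomial (MvPolynomial (Fin n) ℂ)).toRingHom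
        Polynomial.X)
      = idealHomog ν I ∧
    Nonempty ((Polynomial (MvPolynomial (Fin (k + 1)) ℂ) ⧸ idealHomog ν I) ≃+*
      Algebra.adjoin ℂ
        (Set.range (fun j => homog ω (b j)) ∪ {(Polynomial.X : Polynomial (MvPolynomial (Fin n) ℂ))})) := by
  have hdeg (j : Fin (k + 1)) : ν j = wdeg ω (b j) :=
    hν ▸ wdot_eq_wdeg_of_initForm_eq_monomial (hin j) (hc j)
  subst hI
  have hker := ker_homogEval (b := b) hdeg
  refine ⟨hker, ⟨?_⟩⟩
  exact ((Ideal.quotientEquivAlgOfEq ℂ hker.symm).trans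
    ((Ideal.quotientKerEquivRange (homogEval ω b)).trans
      (Subalgebra.equivOfEq _ _ range_homogEval))).toRingEquiv

/-- Let `b₀,…,b_k` be nonzero polynomials whose initial forms are single
terms with exponents `α_j`, let `ν := (⟨ω,α₀⟩,…,⟨ω,α_k⟩)` and let `I` be the ideal of
algebraic relations of the `b_j`. If `{b₀,…,b_k}` is a SAGBI basis with respect to `ω`,
then the kernel of the `ℂ[t]`-algebra homomorphism `ℂ[z₀,…,z_k][t] → ℂ[x₁,…,xₙ][t]`
sending `z_j ↦ (b_j)_t^ω` and `t ↦ t` equals the homogenized ideal `I_t^ν`; consequently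
the `ℂ[t]`-subalgebra of `ℂ[x₁,…,xₙ][t]` generated by the `(b_j)_t^ω` (i.e. the
ℂ-subalgebra generated by the `(b_j)_t^ω` together with `t`) is isomorphic to
`ℂ[z₀,…,z_k][t]/I_t^ν`. -/
theorem ker_homog_eval_eq_idealHomog {n k : ℕ} (ω : Fin n → ℤ)
    (b : Fin (k + 1) → MvPolynomial (Fin n) ℂ) (hb : ∀ j, b j ≠ 0)
    (α : Fin (k + 1) → (Fin n →₀ ℕ)) (c : Fin (k + 1) → ℂ) (hc : ∀ j, c j ≠ 0)
    (hin : ∀ j, initForm ω (b j) = monomial (α j) (c j))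
    (ν : Fin (k + 1) → ℤ) (hν : ν = fun j => wdot ω (α j))
    (I : Ideal (MvPolynomial (Fin (k + 1)) ℂ))
    (hI : I = RingHom.ker (MvPolynomial.aeval b :
        MvPolynomial (Fin (k + 1)) ℂ →ₐ[ℂ] MvPolynomial (Fin n) ℂ).toRingHom)
    (hsagbi : IsSagbiBasis ω b) :
    RingHom.ker (Polynomial.eval₂RingHom
        (MvPolynomial.aeval (fun j => homog ω (b j)) :
          MvPolynomial (Fin (k + 1)) ℂ →ₐ[ℂ] Polynomial (MvPolynomial (Fin n) ℂ)).toRingHom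
        Polynomial.X)
      = idealHomog ν I ∧
    Nonempty ((Polynomial (MvPolynomial (Fin (k + 1)) ℂ) ⧸ idealHomog ν I) ≃+*
      Algebra.adjoin ℂ
        (Set.range (fun j => homog ω (b j)) ∪ {(Polynomial.X : Polynomial (MvPolynomial (Fin n) ℂ))})) :=
  ker_homog_eval_eq_idealHomog_general ω b α c hc hin ν hν I hI
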